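/- arXiv:2302.10336 — 5 statements merged into one kernel-verified Lean document; each statement's English description precedes it below -/
import Mathlib

section
/- Let u and v be words with |v| < |u|, and let s be the maximal common suffix of the left-infinite words v^∞ and v^∞u. If |s| ≥ |v| + |u|, then u and v are powers of a common word. -/
/-!
Reading letters from the right, `x = v^∞` has period `|v|`, and dropping the last `|u|` letters
of `y = v^∞u` leaves `x`. Since `x` and `y` agree on their last `|u| + |v|` letters, `x` has
period `|u|` on its last `|v|` positions, and then everywhere by `|v|`-periodicity. Hence `x` has
period `d = gcd(|u|, |v|)`, and `u` and `v`, being suffixes of `x` of lengths divisible by `d`,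
are both powers of the last `d` letters of `x`.
-/

/-- The `k`-fold concatenation of the word `v` with itself. -/
def wpow {A : Type*} (v : List A) (k : ℕ) : List A := (List.replicate k v).flatten

/-- `s` is a (finite) suffix of the left-infinite word `x`, where `x n` denotes the
letter of `x` at distance `n` from the right end (`x 0` is the last letter). -/
def LSuffix {A : Type*} (s : List A) (x : ℕ → A) : Prop :=
  ∀ i, i < s.length → s.reverse[i]? = some (x i)

open Function

namespace Function.Periodic

variable {α : Type*} {f : ℕ → α} {m n : ℕ}

theorem nat_mod (hm : Periodic f m) (hn : Periodic f n) : Periodic f (m % n) := fun i =>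
  calc f (i + m % n) = f (i + m % n + m / n * n) := (hn.nat_mul (m / n) _).symm
    _ = f (i + m) := by rw [add_assoc, Nat.mod_add_div']
    _ = f i := hm i

theorem nat_gcd (hm : Periodic f m) (hn : Periodic f n) : Periodic f (m.gcd n) := by
  induction m, n using Nat.gcd.induction with
  | H0 n => rwa [Nat.gcd_zero_left]
  | H1 m n _ ih => rw [Nat.gcd_rec]; exact ih (hn.nat_mod hm) hm

theorem periodic_of_forall_lt (hn : Periodic f n) (hn0 : 0 < n) (h : ∀ i < n, f (i + m) = f i) :
    Periodic f m := fun i =>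
  calc f (i + m) = f (i % n + m) := ((hn.add_const m).map_mod_nat i).symm
    _ = f (i % n) := h _ (Nat.mod_lt i hn0)
    _ = f i := hn.map_mod_nat i

end Function.Periodic

section Words

variable {A : Type*}

theorem wpow_length (v : List A) (k : ℕ) : (wpow v k).length = k * v.length := by
  simp [wpow]

theorem wpow_succ' (v : List A) (k : ℕ) : wpow v (k + 1) = wpow v k ++ v := by
  simp [wpow, List.replicate_succ']

theorem wpow_reverse (v : List A) (k : ℕ) : (wpow v k).reverse = wpow v.reverse k := by
  simp [wpow, List.reverse_flatten]

theorem ofFn_mul_eq_wpow {x : ℕ → A} {d : ℕ} (hd : Periodic x d) (m : ℕ) :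
    List.ofFn (fun i : Fin (m * d) => x i) = wpow (List.ofFn fun i : Fin d => x i) m := by
  induction m with
  | zero => simp [wpow]
  | succ m ih =>
    rw [wpow_succ', ← ih]
    simp only [Nat.succ_mul, List.ofFn_add]
    congr 2
    funext j
    simp only [Fin.val_cast, Fin.val_natAdd]
    rw [add_comm]
    exact hd.nat_mul m j

end Words

namespace LSuffix

variable {A : Type*} {s a b : List A} {x y : ℕ → A}

theorem reverse_eq_ofFn (h : LSuffix s x) : s.reverse = List.ofFn fun i : Fin s.length => x i := by
  refine List.ext_getElem? fun i => ?_
  by_cases hi : i < s.length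
  · rw [h i hi]
    simp [hi]
  · simp [hi]

theorem eq_on (hx : LSuffix s x) (hy : LSuffix s y) : ∀ i < s.length, x i = y i :=
  fun i hi => Option.some.inj ((hx i hi).symm.trans (hy i hi))

theorem congr (hy : LSuffix s y) (hxy : ∀ i < s.length, x i = y i) : LSuffix s x :=
  fun i hi => hxy i hi ▸ hy i hi

theorem left_of_append (h : LSuffix (a ++ b) x) : LSuffix a fun i => x (i + b.length) :=
  fun i hi => by
    have := h (i + b.length) (by simp; omega)
    rwa [List.reverse_append, List.getElem?_append_right (by simp), List.length_reverse,
      Nat.add_sub_cancel] at this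

theorem eq_wpow {d m : ℕ} (h : LSuffix s x) (hd : Periodic x d) (hs : s.length = m * d) :
    s = wpow (List.ofFn fun i : Fin d => x i).reverse m := by
  rw [← wpow_reverse, ← ofFn_mul_eq_wpow hd, ← List.reverse_eq_iff, h.reverse_eq_ofFn]
  simp [hs]

end LSuffix

theorem eq_of_forall_lsuffix_wpow {A : Type*} {v : List A} {x x' : ℕ → A} (hv : v ≠ [])
    (hx : ∀ k, LSuffix (wpow v k) x) (hx' : ∀ k, LSuffix (wpow v k) x') : x = x' := by
  funext i
  refine (hx (i + 1)).eq_on (hx' (i + 1)) i ?_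
  rw [wpow_length]
  exact Nat.lt_of_lt_of_le i.lt_succ_self (Nat.le_mul_of_pos_right _ (List.length_pos_iff.mpr hv))

theorem long_common_suffix_implies_common_power_general {A : Type*} (u v s : List A)
    (hv : v ≠ []) (hlen : v.length < u.length)
    (x y : ℕ → A)
    -- `x` is the left-infinite word `v^∞`
    (hx : ∀ k : ℕ, LSuffix (wpow v k) x)
    -- `y` is the left-infinite word `v^∞ u`
    (hy : ∀ k : ℕ, LSuffix (wpow v k ++ u) y)
    -- `s` is the maximal common suffix of `x` and `y`
    (hsx : LSuffix s x) (hsy : LSuffix s y)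
    (hbig : v.length + u.length ≤ s.length) :
    ∃ (w : List A) (t r : ℕ), 0 < t ∧ 0 < r ∧ u = wpow w t ∧ v = wpow w r := by
  have hq : 0 < v.length := List.length_pos_iff.mpr hv
  have hp : 0 < u.length := hq.trans hlen
  have hperq : Periodic x v.length := congrFun <| eq_of_forall_lsuffix_wpow hv
    (fun k => (wpow_succ' v k ▸ hx (k + 1)).left_of_append) hx
  have hyx : (fun i => y (i + u.length)) = x :=
    eq_of_forall_lsuffix_wpow hv (fun k => (hy k).left_of_append) hx
  have hxy : ∀ i < s.length, x i = y i := hsx.eq_on hsy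
  have hperp : Periodic x u.length :=
    hperq.periodic_of_forall_lt hq fun i hi => (hxy _ (by omega)).trans (congrFun hyx i)
  have hu : LSuffix u x :=
    (by simpa [wpow] using (hy 0) : LSuffix u y).congr fun i hi => hxy i (by omega)
  have hvx : LSuffix v x := by simpa [wpow] using hx 1
  set d := u.length.gcd v.length
  have hperd : Periodic x d := hperp.nat_gcd hperq
  have hd : 0 < d := Nat.gcd_pos_of_pos_left v.length hp
  exact ⟨_, u.length / d, v.length / d,
    Nat.div_pos (Nat.gcd_le_left _ hp) hd, Nat.div_pos (Nat.gcd_le_right _ hq) hd,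
    hu.eq_wpow hperd (Nat.div_mul_cancel (Nat.gcd_dvd_left _ _)).symm,
    hvx.eq_wpow hperd (Nat.div_mul_cancel (Nat.gcd_dvd_right _ _)).symm⟩

/-- Let `|v| < |u|` and let `s` be the maximal common suffix of the left-infinite
words `v^∞` and `v^∞u`.  If `|s| ≥ |v| + |u|` then `u` and `v` are powers of a
common word. -/
theorem long_common_suffix_implies_common_power {A : Type*} (u v s : List A)
    (hv : v ≠ []) (hlen : v.length < u.length)
    (x y : ℕ → A)
    -- `x` is the left-infinite word `v^∞`
    (hx : ∀ k : ℕ, LSuffix (wpow v k) x)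
    -- `y` is the left-infinite word `v^∞ u`
    (hy : ∀ k : ℕ, LSuffix (wpow v k ++ u) y)
    -- `s` is the maximal common suffix of `x` and `y`
    (hsx : LSuffix s x) (hsy : LSuffix s y)
    (hmax : ∀ s' : List A, LSuffix s' x → LSuffix s' y → s'.length ≤ s.length)
    (hbig : v.length + u.length ≤ s.length) :
    ∃ (w : List A) (t r : ℕ), 0 < t ∧ 0 < r ∧ u = wpow w t ∧ v = wpow w r :=
  long_common_suffix_implies_common_power_general u v s hv hlen x y hx hy hsx hsy hbig
end

section
/- If X is an infinite subshift and T denotes the set of lengths n for which X has more than one right-special word of length n, then for all q > r: p(q) ≥ p(r) + (q − r) + |T ∩ {r, ..., q−1}|. -/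
variable {A : Type*}

/-- `X ⊆ A^ℤ` is a subshift: closed and invariant under the shift in both directions. -/
def IsSubshift [TopologicalSpace A] (X : Set (ℤ → A)) : Prop :=
  IsClosed X ∧ (∀ x ∈ X, (fun n => x (n + 1)) ∈ X) ∧ (∀ x ∈ X, (fun n => x (n - 1)) ∈ X)

/-- The word `w` occurs in some point of `X`. -/
def InLang (X : Set (ℤ → A)) (w : List A) : Prop :=
  ∃ x ∈ X, ∃ k : ℤ, ∀ (i : ℕ) (h : i < w.length), x (k + i) = w.get ⟨i, h⟩

/-- The set of letters which can follow `w` in the language of `X`. -/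
def Follow (X : Set (ℤ → A)) (w : List A) : Set A := {a | InLang X (w ++ [a])}

/-- `w` is right-special: it can be extended to the right in at least two ways. -/
def RightSpecial (X : Set (ℤ → A)) (w : List A) : Prop := 1 < (Follow X w).ncard

/-- `w` is left-special: it can be extended to the left in at least two ways. -/
def LeftSpecial (X : Set (ℤ → A)) (w : List A) : Prop :=
  1 < {a : A | InLang X (a :: w)}.ncard

/-- The word complexity function of `X`. -/
noncomputable def complexity (X : Set (ℤ → A)) (n : ℕ) : ℕ :=
  {w : List A | w.length = n ∧ InLang X w}.ncard

/-! Since every word of `X` extends to the right, `p(n + 1)` is the sum of `#Follow(w)` over the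
words `w` of length `n`, so `p(n + 1) - p(n)` is at least the number `s(n)` of right-special words
of length `n`. Suffixes of right-special words are right-special, so a length without right-special
words makes `p` eventually non-increasing; but `p` is unbounded when `X` is infinite, since finitely
many distinct points are already separated by a long enough central window. Hence `s(n) ≥ 1` for
all `n` and `s(n) ≥ 2` on `T`, and summing over `[r, q)` gives the bound. -/

open Filter

variable {X : Set (ℤ → A)}

theorem inLang_ofFn {x : ℤ → A} (hx : x ∈ X) (k : ℤ) (n : ℕ) :
    InLang X (List.ofFn fun i : Fin n => x (k + i)) :=
  ⟨x, hx, k, fun _ _ => by simp⟩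

theorem InLang.of_infix {v w : List A} (hw : InLang X w) (hvw : v <:+: w) : InLang X v := by
  obtain ⟨s, t, rfl⟩ := hvw
  obtain ⟨x, hx, k, hk⟩ := hw
  refine ⟨x, hx, k + s.length, fun i hi => ?_⟩
  have := hk (s.length + i) (by simp; omega)
  simp only [List.get_eq_getElem, List.append_assoc] at this ⊢
  rw [List.getElem_append_right (by omega), List.getElem_append_left (by simpa using hi)] at this
  simpa [add_assoc] using this

theorem InLang.follow_nonempty {w : List A} (hw : InLang X w) : (Follow X w).Nonempty := by
  obtain ⟨x, hx, k, hk⟩ := hw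
  refine ⟨x (k + w.length), x, hx, k, fun i hi => ?_⟩
  simp only [List.get_eq_getElem, List.getElem_append]
  split_ifs with hiw
  · simpa using hk i hiw
  · simp [show i = w.length by simp at hi; omega]

theorem follow_subset_of_suffix {v w : List A} (h : v <:+ w) : Follow X w ⊆ Follow X v := by
  obtain ⟨u, rfl⟩ := h
  exact fun a ha => InLang.of_infix ha ⟨u, [], by simp⟩

theorem RightSpecial.of_suffix [Finite A] {v w : List A} (hw : RightSpecial X w) (h : v <:+ w) :
    RightSpecial X v :=
  hw.trans_le (Set.ncard_le_ncard (follow_subset_of_suffix h))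

theorem RightSpecial.inLang {w : List A} (hw : RightSpecial X w) : InLang X w := by
  obtain ⟨a, ha⟩ := Set.nonempty_of_ncard_ne_zero (Nat.ne_zero_of_lt hw)
  exact InLang.of_infix ha (List.prefix_append _ _).isInfix

def wordsOfLength (X : Set (ℤ → A)) (n : ℕ) : Set (List A) := {w | w.length = n ∧ InLang X w}

theorem complexity_eq_ncard (n : ℕ) : complexity X n = (wordsOfLength X n).ncard := rfl

theorem finite_wordsOfLength [Finite A] (X : Set (ℤ → A)) (n : ℕ) : (wordsOfLength X n).Finite :=
  (List.finite_length_eq A n).subset fun _ hw => hw.1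

theorem complexity_succ_eq_sum [Finite A] (n : ℕ) :
    complexity X (n + 1) =
      ∑ w ∈ (finite_wordsOfLength X n).toFinset, (Follow X w).ncard := by
  classical
  have hwords : (finite_wordsOfLength X (n + 1)).toFinset =
      (finite_wordsOfLength X n).toFinset.biUnion
        fun w => (Set.toFinite (Follow X w)).toFinset.image (w ++ [·]) := by
    ext u
    simp only [Set.Finite.mem_toFinset, Finset.mem_biUnion, Finset.mem_image, wordsOfLength,
      Set.mem_ofPred_eq, Follow]
    constructor
    · rintro ⟨hu, hL⟩
      obtain ⟨w, a, rfl⟩ : ∃ w a, u = w ++ [a] := by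
        rcases u.eq_nil_or_concat with rfl | ⟨w, a, rfl⟩
        · simp at hu
        · exact ⟨w, a, List.concat_eq_append⟩
      exact ⟨w, ⟨by simpa using hu, hL.of_infix (List.prefix_append _ _).isInfix⟩, a, hL, rfl⟩
    · rintro ⟨w, ⟨hw, -⟩, a, ha, rfl⟩
      exact ⟨by simp [hw], ha⟩
  rw [complexity_eq_ncard, Set.ncard_eq_toFinset_card _ (finite_wordsOfLength X _), hwords,
    Finset.card_biUnion]
  · refine Finset.sum_congr rfl fun w _ => ?_
    rw [Finset.card_image_of_injective _ fun a b h => by simpa using h,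
      Set.ncard_eq_toFinset_card]
  · intro w _ w' _ hne
    simp only [Function.onFun, Finset.disjoint_left, Finset.mem_image]
    rintro _ ⟨a, -, rfl⟩ ⟨a', -, h⟩
    exact hne (List.append_inj' h rfl).1.symm

theorem complexity_add_ncard_rightSpecial_le [Finite A] (n : ℕ) :
    complexity X n + {w : List A | w.length = n ∧ RightSpecial X w}.ncard ≤
      complexity X (n + 1) := by
  classical
  set L := (finite_wordsOfLength X n).toFinset
  have hRS : {w : List A | w.length = n ∧ RightSpecial X w} = ↑(L.filter (RightSpecial X ·)) := by
    ext w
    simp only [L, Finset.coe_filter, Set.Finite.mem_toFinset, wordsOfLength, Set.mem_ofPred_eq]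
    exact ⟨fun h => ⟨⟨h.1, h.2.inLang⟩, h.2⟩, fun h => ⟨h.1.1, h.2⟩⟩
  have hfollow : ∀ w ∈ L, 1 + (if RightSpecial X w then 1 else 0) ≤ (Follow X w).ncard := by
    intro w hw
    have hpos : 0 < (Follow X w).ncard :=
      (Set.ncard_pos (Set.toFinite _)).2 ((Set.Finite.mem_toFinset _).1 hw).2.follow_nonempty
    split_ifs with hw_special
    · exact hw_special
    · exact hpos
  calc complexity X n + {w : List A | w.length = n ∧ RightSpecial X w}.ncard
      = ∑ w ∈ L, (1 + if RightSpecial X w then 1 else 0) := by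
        rw [Finset.sum_add_distrib, Finset.sum_boole, hRS, Set.ncard_coe_finset,
          complexity_eq_ncard, Set.ncard_eq_toFinset_card _ (finite_wordsOfLength X n)]
        simp [L]
    _ ≤ ∑ w ∈ L, (Follow X w).ncard := Finset.sum_le_sum hfollow
    _ = complexity X (n + 1) := (complexity_succ_eq_sum n).symm

theorem complexity_succ_le_of_forall_not_rightSpecial [Finite A] {n : ℕ}
    (hn : ∀ w : List A, w.length = n → ¬RightSpecial X w) :
    complexity X (n + 1) ≤ complexity X n := by
  rw [complexity_succ_eq_sum, complexity_eq_ncard,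
    Set.ncard_eq_toFinset_card _ (finite_wordsOfLength X n), Finset.card_eq_sum_ones]
  exact Finset.sum_le_sum fun w hw => not_lt.1 (hn w ((Set.Finite.mem_toFinset _).1 hw).1)

theorem complexity_mono [Finite A] : Monotone (complexity X) :=
  monotone_nat_of_le_succ fun n => le_self_add.trans (complexity_add_ncard_rightSpecial_le n)

theorem eventually_injOn_ofFn_window {t : Set (ℤ → A)} (ht : t.Finite) :
    ∀ᶠ m : ℕ in atTop, t.InjOn fun x => List.ofFn fun i : Fin (2 * m + 1) => x (-m + i) := by
  refine ht.eventually_all.2 fun x _ => ht.eventually_all.2 fun y _ => ?_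
  by_cases hxy : x = y
  · exact Eventually.of_forall fun _ _ => hxy
  obtain ⟨i, hi⟩ := Function.ne_iff.1 hxy
  filter_upwards [eventually_ge_atTop i.natAbs] with m hm heq
  have := congrFun (List.ofFn_injective heq) ⟨(i + m).toNat, by omega⟩
  simp only [show -(m : ℤ) + (i + m).toNat = i by omega] at this
  exact absurd this hi

theorem tendsto_complexity_atTop [Finite A] (hinf : X.Infinite) :
    Tendsto (complexity X) atTop atTop := by
  refine tendsto_atTop_atTop_of_monotone complexity_mono fun C => ?_
  obtain ⟨t, htX, htfin, rfl⟩ := hinf.exists_subset_ncard_eq C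
  obtain ⟨m, hm⟩ := (eventually_injOn_ofFn_window htfin).exists
  exact ⟨2 * m + 1, Set.ncard_le_ncard_of_injOn _
    (fun x hx => ⟨by simp, inLang_ofFn (htX hx) _ _⟩) hm (finite_wordsOfLength X _)⟩

theorem exists_rightSpecial_of_infinite [Finite A] (hinf : X.Infinite) (n : ℕ) :
    ∃ w : List A, w.length = n ∧ RightSpecial X w := by
  by_contra! hnone
  have hbdd : ∀ m ≥ n, complexity X m ≤ complexity X n := by
    intro m hm
    induction m, hm using Nat.le_induction with
    | base => rfl
    | succ m hm ih =>
      refine (complexity_succ_le_of_forall_not_rightSpecial fun w hw hRS => ?_).trans ih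
      exact hnone _ (by simp [hw]; omega) (hRS.of_suffix (w.drop_suffix (m - n)))
  obtain ⟨m, hm, hlt⟩ := ((eventually_ge_atTop n).and
    ((tendsto_complexity_atTop hinf).eventually_gt_atTop (complexity X n))).exists
  exact (hbdd m hm).not_gt hlt

theorem add_sub_add_ncard_inter_Ico_le {f : ℕ → ℕ} {T : Set ℕ} (hf : ∀ n, f n + 1 ≤ f (n + 1))
    (hfT : ∀ n ∈ T, f n + 2 ≤ f (n + 1)) {r q : ℕ} (hrq : r ≤ q) :
    f r + (q - r) + (T ∩ Set.Ico r q).ncard ≤ f q := by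
  induction q, hrq using Nat.le_induction with
  | base => simp
  | succ q hrq ih =>
    have hIco : Set.Ico r (q + 1) = insert q (Set.Ico r q) := by ext; simp; omega
    rw [hIco]
    by_cases hq : q ∈ T
    · rw [Set.inter_insert_of_mem hq, Set.ncard_insert_of_notMem (by simp)
        ((Set.finite_Ico r q).inter_of_right T)]
      have := hfT q hq
      omega
    · rw [Set.inter_insert_of_notMem hq]
      have := hf q
      omega

theorem complexity_lower_bound_general [Fintype A]
    (X : Set (ℤ → A)) (hinf : X.Infinite)
    (T : Set ℕ)
    (hT : T = {n : ℕ | 1 < {w : List A | w.length = n ∧ RightSpecial X w}.ncard})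
    (r q : ℕ) (h : r < q) :
    complexity X r + (q - r) + (T ∩ Set.Ico r q).ncard ≤ complexity X q := by
  refine add_sub_add_ncard_inter_Ico_le (fun n => ?_) (fun n hn => ?_) h.le
  · have hspecial : 0 < {w : List A | w.length = n ∧ RightSpecial X w}.ncard :=
      (Set.ncard_pos ((List.finite_length_eq A n).subset fun _ hw => hw.1)).2
        (exists_rightSpecial_of_infinite hinf n)
    have hstep := complexity_add_ncard_rightSpecial_le (X := X) n
    omega
  · rw [hT] at hn
    exact (Nat.add_le_add_left hn _).trans (complexity_add_ncard_rightSpecial_le n)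

/-- If `X` is an infinite subshift and `T` is the set of lengths with more than one
right-special word, then `p(q) ≥ p(r) + (q − r) + |T ∩ {r, ..., q−1}|`. -/
theorem complexity_lower_bound [Fintype A] [TopologicalSpace A] [DiscreteTopology A]
    (X : Set (ℤ → A)) (hX : IsSubshift X) (hinf : X.Infinite)
    (T : Set ℕ)
    (hT : T = {n : ℕ | 1 < {w : List A | w.length = n ∧ RightSpecial X w}.ncard})
    (r q : ℕ) (h : r < q) :
    complexity X r + (q - r) + (T ∩ Set.Ico r q).ncard ≤ complexity X q :=
  complexity_lower_bound_general X hinf T hT r q h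
end

section
/- For the substitution τ_{m,n}: 0 ↦ 0^{m−1}1, 1 ↦ 0^{n−1}1 with 0 < m < n, the associated matrix is M = [[m−1, 1],[n−1, 1]], whose eigenvalues are (m ± √(m² + 4(n−m)))/2; when m < n ≤ 2m the largest eigenvalue is a Pisot number, i.e., the second eigenvalue has absolute value strictly less than 1 while the first is greater than 1. -/
/-!
The characteristic polynomial of `M` is `χ(x) = x² - m x + (m - n)`, whose discriminant
`m² + 4(n - m)` is positive, so its roots are the two stated numbers. Since `χ(1) = 1 - n < 0`,
the point `1` lies strictly between the roots; when `n ≤ 2m` also `χ(-1) = 1 + 2m - n > 0`, so `-1`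
lies outside the interval between them, which forces `-1 < lamMinus < 1 < lamPlus`.
-/

namespace Matrix

variable {K : Type*} [Field K]

theorem det_fin_two_sub_smul_one (A : Matrix (Fin 2) (Fin 2) K) (x : K) :
    (A - x • (1 : Matrix (Fin 2) (Fin 2) K)).det = x * x - A.trace * x + A.det := by
  simp only [det_fin_two, trace_fin_two, sub_apply, smul_apply, one_apply_eq,
    one_apply_ne (by decide : (0 : Fin 2) ≠ 1), one_apply_ne (by decide : (1 : Fin 2) ≠ 0),
    smul_eq_mul]
  ring

theorem det_fin_two_sub_smul_one_eq_zero_iff [NeZero (2 : K)] (A : Matrix (Fin 2) (Fin 2) K)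
    {s : K} (hs : discrim 1 (-A.trace) A.det = s * s) (x : K) :
    (A - x • (1 : Matrix (Fin 2) (Fin 2) K)).det = 0 ↔
      x = (A.trace + s) / 2 ∨ x = (A.trace - s) / 2 := by
  rw [det_fin_two_sub_smul_one]
  simpa [sub_eq_add_neg, neg_mul] using quadratic_eq_zero_iff one_ne_zero hs x

end Matrix

theorem one_lt_and_abs_lt_one_of_mul_neg_of_mul_pos {R : Type*} [Field R] [LinearOrder R]
    [IsStrictOrderedRing R] {a b : R} (hba : b ≤ a) (h₁ : (1 - a) * (1 - b) < 0)
    (h₂ : 0 < (1 + a) * (1 + b)) : 1 < a ∧ |b| < 1 := by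
  have hb : b < 1 := by
    by_contra! hb
    exact h₁.not_ge (mul_nonneg_of_nonpos_of_nonpos (by linarith) (by linarith))
  have ha : 1 < a := by
    by_contra! ha
    exact h₁.not_ge (mul_nonneg (by linarith) (by linarith))
  have hb' : 0 < 1 + b := pos_of_mul_pos_right h₂ (by linarith)
  exact ⟨ha, abs_lt.2 ⟨by linarith, hb⟩⟩

theorem substitution_matrix_pisot_general (m n : ℕ) (hmn : m < n) :
    let M : Matrix (Fin 2) (Fin 2) ℝ := !![(m : ℝ) - 1, 1; (n : ℝ) - 1, 1]
    let lamPlus : ℝ := ((m : ℝ) + Real.sqrt ((m : ℝ) ^ 2 + 4 * ((n : ℝ) - m))) / 2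
    let lamMinus : ℝ := ((m : ℝ) - Real.sqrt ((m : ℝ) ^ 2 + 4 * ((n : ℝ) - m))) / 2
    (M - lamPlus • (1 : Matrix (Fin 2) (Fin 2) ℝ)).det = 0 ∧
    (M - lamMinus • (1 : Matrix (Fin 2) (Fin 2) ℝ)).det = 0 ∧
    (∀ lam : ℝ, (M - lam • (1 : Matrix (Fin 2) (Fin 2) ℝ)).det = 0 →
      lam = lamPlus ∨ lam = lamMinus) ∧
    (n ≤ 2 * m → 1 < lamPlus ∧ |lamMinus| < 1) := by
  intro M lamPlus lamMinus
  have hmn' : (m : ℝ) + 1 ≤ n := by exact_mod_cast hmn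
  set s := Real.sqrt ((m : ℝ) ^ 2 + 4 * ((n : ℝ) - m))
  have hs : s * s = (m : ℝ) ^ 2 + 4 * ((n : ℝ) - m) := Real.mul_self_sqrt (by nlinarith)
  have htrace : M.trace = m := by simp [M, Matrix.trace_fin_two]
  have hdet : M.det = (m : ℝ) - n := by simp [M, Matrix.det_fin_two]
  have hroots := M.det_fin_two_sub_smul_one_eq_zero_iff (s := s)
    (by rw [htrace, hdet, hs, discrim]; ring)
  rw [htrace] at hroots
  refine ⟨(hroots _).2 (.inl rfl), (hroots _).2 (.inr rfl), fun _ => (hroots _).1, fun h2m => ?_⟩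
  have h2m' : (n : ℝ) ≤ 2 * m := by exact_mod_cast h2m
  have hsum : lamPlus + lamMinus = m := by ring
  have hprod : lamPlus * lamMinus = m - n := by
    simp only [lamPlus, lamMinus]; linear_combination -hs / 4
  refine one_lt_and_abs_lt_one_of_mul_neg_of_mul_pos ?_ ?_ ?_
  · simp only [lamPlus, lamMinus]; linarith [Real.sqrt_nonneg ((m : ℝ) ^ 2 + 4 * ((n : ℝ) - m))]
  · rw [show (1 - lamPlus) * (1 - lamMinus) = 1 - n by linear_combination hprod - hsum]
    linarith
  · rw [show (1 + lamPlus) * (1 + lamMinus) = 1 + 2 * m - n by linear_combination hprod + hsum]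
    linarith

/-- For the substitution `τ_{m,n} : 0 ↦ 0^{m−1}1, 1 ↦ 0^{n−1}1` with `0 < m < n`,
the associated matrix is `M = [[m−1, 1], [n−1, 1]]`, whose eigenvalues are
`(m ± √(m² + 4(n−m)))/2`; when `n ≤ 2m` the matrix is Pisot: the larger
eigenvalue exceeds `1` and the other has absolute value less than `1`. -/
theorem substitution_matrix_pisot (m n : ℕ) (hm : 0 < m) (hmn : m < n) :
    let M : Matrix (Fin 2) (Fin 2) ℝ := !![(m : ℝ) - 1, 1; (n : ℝ) - 1, 1]
    let lamPlus : ℝ := ((m : ℝ) + Real.sqrt ((m : ℝ) ^ 2 + 4 * ((n : ℝ) - m))) / 2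
    let lamMinus : ℝ := ((m : ℝ) - Real.sqrt ((m : ℝ) ^ 2 + 4 * ((n : ℝ) - m))) / 2
    (M - lamPlus • (1 : Matrix (Fin 2) (Fin 2) ℝ)).det = 0 ∧
    (M - lamMinus • (1 : Matrix (Fin 2) (Fin 2) ℝ)).det = 0 ∧
    (∀ lam : ℝ, (M - lam • (1 : Matrix (Fin 2) (Fin 2) ℝ)).det = 0 →
      lam = lamPlus ∨ lam = lamMinus) ∧
    (n ≤ 2 * m → 1 < lamPlus ∧ |lamMinus| < 1) :=
  substitution_matrix_pisot_general m n hmn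
end

section
/- Let u, v be words and m < n positive integers, and suppose v is a suffix of u, u = u′v. Then the words y = (v^{m−1}u)^p v^{n−1}u and z = v^{n−1}u (v^{m−1}u)^p have equal length, and the number of positions at which y and z differ equals p times the number of positions at which u′v^{n−m} and v^{n−m}u′ differ (equivalently, p times the number of positions at which uv^{n−m} and v^{n−m}u differ), provided m < n ≤ 2m. -/
/-- The number of positions at which two words differ (Hamming distance, where
positions beyond the shorter word also count via `getElem?`). -/
def hammDist {A : Type*} [DecidableEq A] (y z : List A) : ℕ :=
  ((Finset.range (max y.length z.length)).filter (fun i => y[i]? ≠ z[i]?)).card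

set_option linter.unusedSectionVars false

namespace HD
variable {A : Type*} [DecidableEq A]

lemma wpow_succ (v : List A) (k : ℕ) : wpow v (k+1) = v ++ wpow v k := by
  rw [wpow, List.replicate_succ, List.flatten_cons]; rfl

lemma wpow_add (v : List A) (j k : ℕ) : wpow v (j+k) = wpow v j ++ wpow v k := by
  rw [wpow, List.replicate_add, List.flatten_append]; rfl

lemma wpow_zero (v : List A) : wpow v 0 = [] := rfl

lemma wpow_one (v : List A) : wpow v 1 = v := by simp [wpow]

lemma wpow_length (v : List A) (k : ℕ) : (wpow v k).length = k * v.length := by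
  simp [wpow, Nat.mul_comm]

lemma wpow_comm (v : List A) (j k : ℕ) : wpow v j ++ wpow v k = wpow v k ++ wpow v j := by
  rw [← wpow_add, ← wpow_add, Nat.add_comm]

lemma wpow_get (v : List A) (d r : ℕ) (h : r < d * v.length) :
    (wpow v d)[r]? = v[r % v.length]? := by
  induction d generalizing r with
  | zero => simp at h
  | succ d ih =>
    rw [wpow_succ]
    rcases lt_or_ge r v.length with hr | hr
    · rw [List.getElem?_append_left hr, Nat.mod_eq_of_lt hr]
    · rw [List.getElem?_append_right hr]
      have hv : 0 < v.length := by
        rcases Nat.eq_zero_or_pos v.length with h0 | h0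
        · simp [h0] at h
        · exact h0
      have hlt : r - v.length < d * v.length := by
        have : (d+1)*v.length = d*v.length + v.length := by ring
        omega
      rw [ih _ hlt, (Nat.mod_eq_sub_mod hr).symm]

lemma diff_lt {a b : List A} {i : ℕ} (h : a[i]? ≠ b[i]?) : i < max a.length b.length := by
  by_contra hc
  push_neg at hc
  rw [max_le_iff] at hc
  rw [List.getElem?_eq_none hc.1, List.getElem?_eq_none hc.2] at h
  exact h rfl

lemma hammDist_eq_of_le {a b : List A} {N : ℕ} (h : max a.length b.length ≤ N) :
    hammDist a b = ((Finset.range N).filter (fun i => a[i]? ≠ b[i]?)).card := by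
  unfold hammDist
  congr 1
  apply Finset.ext
  intro i
  simp only [Finset.mem_filter, Finset.mem_range]
  exact ⟨fun ⟨h1, h2⟩ => ⟨lt_of_lt_of_le h1 h, h2⟩, fun ⟨h1, h2⟩ => ⟨diff_lt h2, h2⟩⟩

lemma hammDist_cons (x : A) (b cc : List A) : hammDist (x :: b) (x :: cc) = hammDist b cc := by
  unfold hammDist
  have hl : max (x::b).length (x::cc).length = max b.length cc.length + 1 := by
    simp only [List.length_cons]
    omega
  rw [hl]
  have hset : (Finset.range (max b.length cc.length + 1)).filter
        (fun i => (x::b)[i]? ≠ (x::cc)[i]?) =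
      Finset.image (fun j => j + 1)
        ((Finset.range (max b.length cc.length)).filter (fun i => b[i]? ≠ cc[i]?)) := by
    ext i
    simp only [Finset.mem_filter, Finset.mem_range, Finset.mem_image]
    cases i with
    | zero => simp
    | succ j =>
      simp only [List.getElem?_cons_succ]
      constructor
      · rintro ⟨h1, h2⟩; exact ⟨j, ⟨by omega, h2⟩, rfl⟩
      · rintro ⟨j', ⟨h1, h2⟩, h3⟩
        have : j' = j := by omega
        subst this
        exact ⟨by omega, h2⟩
  rw [hset, Finset.card_image_of_injective _ (fun a b h => by omega)]

lemma hammDist_append_left (a b cc : List A) :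
    hammDist (a ++ b) (a ++ cc) = hammDist b cc := by
  induction a with
  | nil => simp
  | cons x a ih => simpa [hammDist_cons] using ih

lemma hammDist_append_right (a b cc : List A) (hbc : b.length = cc.length) :
    hammDist (b ++ a) (cc ++ a) = hammDist b cc := by
  have h1 : max (b++a).length (cc++a).length = b.length + a.length := by
    simp [hbc]
  have h2 : max b.length cc.length ≤ b.length + a.length := by
    simp [hbc]
  rw [hammDist_eq_of_le h2]
  unfold hammDist
  rw [h1]
  congr 1
  apply Finset.filter_congr
  intro i hi
  rcases lt_or_ge i b.length with h | h
  · rw [List.getElem?_append_left h, List.getElem?_append_left (hbc ▸ h)]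
  · have hb : b[i]? = none := List.getElem?_eq_none h
    have hc : cc[i]? = none := List.getElem?_eq_none (by omega)
    rw [List.getElem?_append_right h,
      List.getElem?_append_right (show cc.length ≤ i by omega), hb, hc, hbc]
    simp

lemma hammDist_tri {a b cc : List A} (hab : a.length = b.length) (hbc : b.length = cc.length)
    (h : ∀ i : ℕ, a[i]? = b[i]? ∨ b[i]? = cc[i]?) :
    hammDist a cc = hammDist a b + hammDist b cc := by
  have e1 : hammDist a cc = ((Finset.range a.length).filter (fun i => a[i]? ≠ cc[i]?)).card :=
    hammDist_eq_of_le (by omega)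
  have e2 : hammDist a b = ((Finset.range a.length).filter (fun i => a[i]? ≠ b[i]?)).card :=
    hammDist_eq_of_le (by omega)
  have e3 : hammDist b cc = ((Finset.range a.length).filter (fun i => b[i]? ≠ cc[i]?)).card :=
    hammDist_eq_of_le (by omega)
  rw [e1, e2, e3]
  have hunion : (Finset.range a.length).filter (fun i => a[i]? ≠ cc[i]?) =
      ((Finset.range a.length).filter (fun i => a[i]? ≠ b[i]?)) ∪
      ((Finset.range a.length).filter (fun i => b[i]? ≠ cc[i]?)) := by
    ext i
    simp only [Finset.mem_filter, Finset.mem_range, Finset.mem_union]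
    constructor
    · rintro ⟨h1, h2⟩
      rcases h i with h3 | h3
      · exact Or.inr ⟨h1, fun he => h2 (h3 ▸ he)⟩
      · exact Or.inl ⟨h1, fun he => h2 (he.trans h3)⟩
    · rintro (⟨h1, h2⟩ | ⟨h1, h2⟩)
      · rcases h i with h3 | h3
        · exact absurd h3 h2
        · exact ⟨h1, fun he => h2 (he.trans h3.symm)⟩
      · rcases h i with h3 | h3
        · exact ⟨h1, fun he => h2 (h3.symm.trans he)⟩
        · exact absurd h3 h2
  rw [hunion, Finset.card_union_of_disjoint]
  rw [Finset.disjoint_left]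
  rintro i hi1 hi2
  simp only [Finset.mem_filter] at hi1 hi2
  rcases h i with h3 | h3
  · exact hi1.2 h3
  · exact hi2.2 h3

lemma key (v u u' : List A) (hu : u = u' ++ v) (m d : ℕ) (hm : 0 < m) (hdm : d ≤ m) (k : ℕ) :
    hammDist ((u ++ wpow (wpow v (m-1) ++ u) k) ++ wpow v d)
             (wpow v d ++ (u ++ wpow (wpow v (m-1) ++ u) k))
      = (k+1) * hammDist (u ++ wpow v d) (wpow v d ++ u) := by
  induction k with
  | zero => simp [wpow_zero]
  | succ k ih =>
    set w := wpow v (m-1) ++ u with hwdef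
    set t := wpow v d with htdef
    set h := u ++ wpow w k with hhdef
    have htl : t.length = d * v.length := wpow_length v d
    have hul : u.length = u'.length + v.length := by rw [hu]; simp
    have hwl : w.length = (m-1) * v.length + u.length := by
      rw [hwdef]; simp [wpow_length]
    have hmP : m * v.length = (m-1) * v.length + v.length := by
      have hm1 : m = (m-1) + 1 := by omega
      rw [hm1, Nat.succ_mul]
      congr 1 <;> omega
    have hTle : t.length ≤ w.length := by
      have h1 : d * v.length ≤ m * v.length := Nat.mul_le_mul_right _ hdm
      omega
    have hwk1 : wpow w (k+1) = wpow w k ++ w := by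
      rw [wpow_add w k 1, wpow_one]
    have hends : ∃ h₀ : List A, h = h₀ ++ v := by
      cases k with
      | zero => exact ⟨u', by rw [hhdef, wpow_zero, List.append_nil, hu]⟩
      | succ k' =>
        refine ⟨(u ++ wpow w k') ++ (wpow v (m-1) ++ u'), ?_⟩
        rw [hhdef, wpow_add w k' 1, wpow_one, hwdef, hu]
        simp [List.append_assoc]
    obtain ⟨h₀, hh₀⟩ := hends
    have hhl : h.length = h₀.length + v.length := by rw [hh₀]; simp
    have ha : (u ++ wpow w (k+1)) ++ t = h ++ (w ++ t) := by
      rw [hwk1, hhdef]; simp [List.append_assoc]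
    have hc : t ++ (u ++ wpow w (k+1)) = t ++ (h ++ w) := by
      rw [hwk1, hhdef]; simp [List.append_assoc]
    rw [ha, hc]
    have hlen_ab : (h ++ (w ++ t)).length = (h ++ (t ++ w)).length := by
      simp; omega
    have hlen_bc : (h ++ (t ++ w)).length = (t ++ (h ++ w)).length := by
      simp; omega
    have hpt : ∀ i : ℕ, (h ++ (w ++ t))[i]? = (h ++ (t ++ w))[i]? ∨
        (h ++ (t ++ w))[i]? = (t ++ (h ++ w))[i]? := by
      intro i
      rcases lt_or_ge i h.length with h1 | h1
      · left
        rw [List.getElem?_append_left h1, List.getElem?_append_left h1]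
      rcases lt_or_ge i (h.length + t.length) with h2 | h2
      · -- middle region
        have hr : i - h.length < d * v.length := by omega
        have hP0 : 0 < v.length := by
          rcases Nat.eq_zero_or_pos v.length with h0 | h0
          · have hz : t.length = 0 := by rw [htl, h0, Nat.mul_zero]
            omega
          · exact h0
        have hd0 : 0 < d := by
          rcases Nat.eq_zero_or_pos d with h0 | h0
          · rw [h0] at hr; omega
          · exact h0
        have hdP : d * v.length = (d-1) * v.length + v.length := by
          have hd1 : d = (d-1) + 1 := by omega
          rw [hd1, Nat.succ_mul]
          congr 1 <;> omega
        have hb1 : i - h.length < t.length := by omega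
        rcases lt_or_ge (i - h.length) ((d-1) * v.length) with h3 | h3
        · left
          have hdm' : (d-1) * v.length ≤ (m-1) * v.length :=
            Nat.mul_le_mul_right _ (by omega)
          rw [List.getElem?_append_right h1, List.getElem?_append_right h1,
              List.getElem?_append_left
                (lt_of_lt_of_le hb1 hTle),
              List.getElem?_append_left (show i - h.length < t.length by omega)]
          rw [hwdef, htdef,
              List.getElem?_append_left
                (show i - h.length < (wpow v (m-1)).length by rw [wpow_length]; omega),
              wpow_get v (m-1) _ (by omega), wpow_get v d _ hr]
        · right
          have hTi : t.length ≤ i := by omega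
          rw [List.getElem?_append_right h1,
              List.getElem?_append_left (show i - h.length < t.length by omega),
              List.getElem?_append_right hTi,
              List.getElem?_append_left (show i - t.length < h.length by omega)]
          rw [show h[i - t.length]? = v[i - t.length - h₀.length]? from by
            rw [hh₀]; exact List.getElem?_append_right (by omega)]
          rw [htdef, wpow_get v d _ hr, wpow_length]
          congr 1
          have hmod : (i - h.length) % v.length = (i - h.length) - (d-1) * v.length := by
            have h5 : (i - h.length - (d-1) * v.length + (d-1) * v.length) % v.length
                = (i - h.length - (d-1) * v.length) % v.length :=
              Nat.add_mul_mod_self_right _ _ _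
            have h6 : i - h.length - (d-1) * v.length + (d-1) * v.length = i - h.length := by
              omega
            rw [h6] at h5
            rw [h5, Nat.mod_eq_of_lt (by omega)]
          omega
      · right
        rw [List.getElem?_append_right h1,
            List.getElem?_append_right (show t.length ≤ i - h.length by omega),
            List.getElem?_append_right (show t.length ≤ i by omega),
            List.getElem?_append_right (show h.length ≤ i - t.length by omega)]
        congr 1
        omega
    rw [hammDist_tri hlen_ab hlen_bc hpt]
    have e1 : hammDist (h ++ (w ++ t)) (h ++ (t ++ w)) = hammDist (u ++ t) (t ++ u) := by
      rw [hammDist_append_left]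
      have w1 : w ++ t = wpow v (m-1) ++ (u ++ t) := by
        rw [hwdef]; simp [List.append_assoc]
      have w2 : t ++ w = wpow v (m-1) ++ (t ++ u) := by
        rw [hwdef, htdef, ← List.append_assoc, wpow_comm v d (m-1), List.append_assoc]
      rw [w1, w2, hammDist_append_left]
    have e2 : hammDist (h ++ (t ++ w)) (t ++ (h ++ w)) = (k+1) * hammDist (u ++ t) (t ++ u) := by
      have a1 : h ++ (t ++ w) = (h ++ t) ++ w := (List.append_assoc h t w).symm
      have a2 : t ++ (h ++ w) = (t ++ h) ++ w := (List.append_assoc t h w).symm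
      rw [a1, a2, hammDist_append_right w (h ++ t) (t ++ h) (by simp; omega)]
      exact ih
    rw [e1, e2]
    ring

end HD


/-- Let `v` be a suffix of `u`, say `u = u′v`, and let `0 < m < n ≤ 2m`, `p ≥ 1`.
Then `y = (v^{m−1}u)^p v^{n−1}u` and `z = v^{n−1}u (v^{m−1}u)^p` have equal length
and differ on exactly `p` times the number of positions where `u′v^{n−m}` and
`v^{n−m}u′` differ, equivalently `p` times the number of positions where
`uv^{n−m}` and `v^{n−m}u` differ. -/
theorem hamming_distance_of_shuffled_words {A : Type*} [DecidableEq A]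
    (u u' v : List A) (hu : u = u' ++ v)
    (m n p : ℕ) (hm : 0 < m) (hmn : m < n) (hn2m : n ≤ 2 * m) (hp : 1 ≤ p) :
    let y := wpow (wpow v (m - 1) ++ u) p ++ (wpow v (n - 1) ++ u)
    let z := (wpow v (n - 1) ++ u) ++ wpow (wpow v (m - 1) ++ u) p
    y.length = z.length ∧
    hammDist y z = p * hammDist (u' ++ wpow v (n - m)) (wpow v (n - m) ++ u') ∧
    hammDist y z = p * hammDist (u ++ wpow v (n - m)) (wpow v (n - m) ++ u) := by
  intro y z
  have hsplit : wpow v (n-1) = wpow v (n-m) ++ wpow v (m-1) := by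
    rw [← HD.wpow_add]; congr 1; omega
  have hwp : (wpow v (m-1) ++ u) ++ wpow (wpow v (m-1) ++ u) p
      = wpow (wpow v (m-1) ++ u) p ++ (wpow v (m-1) ++ u) := by
    have h1 := HD.wpow_comm (wpow v (m-1) ++ u) 1 p
    rwa [HD.wpow_one] at h1
  have hy : y = (wpow (wpow v (m-1) ++ u) p ++ wpow v (n-m)) ++ (wpow v (m-1) ++ u) := by
    show wpow (wpow v (m-1) ++ u) p ++ (wpow v (n-1) ++ u) = _
    rw [hsplit]
    simp [List.append_assoc]
  have hz : z = (wpow v (n-m) ++ wpow (wpow v (m-1) ++ u) p) ++ (wpow v (m-1) ++ u) := by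
    show (wpow v (n-1) ++ u) ++ wpow (wpow v (m-1) ++ u) p = _
    rw [hsplit]
    simp only [List.append_assoc]
    rw [show wpow v (m-1) ++ (u ++ wpow (wpow v (m-1) ++ u) p)
        = wpow (wpow v (m-1) ++ u) p ++ (wpow v (m-1) ++ u) from by
      rw [← List.append_assoc]; exact hwp]
  have hlen : y.length = z.length := by
    rw [hy, hz]; simp only [List.length_append]; omega
  have core : hammDist y z = p * hammDist (u ++ wpow v (n-m)) (wpow v (n-m) ++ u) := by
    rw [hy, hz, HD.hammDist_append_right _ _ _ (by simp only [List.length_append]; omega)]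
    have hps : wpow (wpow v (m-1) ++ u) p
        = wpow v (m-1) ++ (u ++ wpow (wpow v (m-1) ++ u) (p-1)) := by
      conv_lhs => rw [show p = (p-1)+1 from by omega, HD.wpow_succ]
      rw [List.append_assoc]
    rw [hps, List.append_assoc]
    rw [show wpow v (n-m) ++ (wpow v (m-1) ++ (u ++ wpow (wpow v (m-1) ++ u) (p-1)))
        = wpow v (m-1) ++ (wpow v (n-m) ++ (u ++ wpow (wpow v (m-1) ++ u) (p-1))) from by
      rw [← List.append_assoc, HD.wpow_comm v (n-m) (m-1), List.append_assoc]]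
    rw [HD.hammDist_append_left]
    rw [HD.key v u u' hu m (n-m) hm (by omega) (p-1)]
    congr 1
    omega
  have hswap : v ++ wpow v (n-m) = wpow v (n-m) ++ v := by
    have h1 := HD.wpow_comm v 1 (n-m); rwa [HD.wpow_one] at h1
  have h2nd : hammDist (u ++ wpow v (n-m)) (wpow v (n-m) ++ u)
      = hammDist (u' ++ wpow v (n-m)) (wpow v (n-m) ++ u') := by
    have e1 : u ++ wpow v (n-m) = (u' ++ wpow v (n-m)) ++ v := by
      rw [hu, List.append_assoc, hswap, ← List.append_assoc]
    have e2 : wpow v (n-m) ++ u = (wpow v (n-m) ++ u') ++ v := by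
      rw [hu, ← List.append_assoc]
    rw [e1, e2, HD.hammDist_append_right _ _ _ (by simp only [List.length_append]; omega)]
  exact ⟨hlen, by rw [core, h2nd], core⟩
end

section
/- Let (d_k) satisfy d_{k+1} = b_{k+1} d_k + a_{k+1} d_{k-1} with positive integers a_k ≤ b_k + 1 and b_k ≥ 1, and suppose n_{k+1} d_k > d_{k+1} for all k (where n_{k+1} ≥ b_{k+1} + 2). Then the set S_k = { Σ_{i=k}^{r} p_i d_i : r > k, 0 ≤ p_i ≤ n_{i+1}+1 } is syndetic in ℕ: every interval of length d_k contains an element of S_k. -/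
/-! Since `d_{j+1} < n_{j+1} d_j` (with `d_j = D (j + 1)`), the greedy expansion of any
`N < d_{r+1}` in the mixed radix `d_k, …, d_r` has digits `p_j < n_{j+1}` and a remainder `< d_k`.
Expanding `N = M + d_k - 1` thus gives a digit sum in `[M, M + d_k)`, and a large enough `r`
exists because the recurrence makes `d` strictly increasing. -/

open Finset

section GreedyDigits

variable {e c : ℕ → ℕ}

theorem exists_digits_sum_le_lt_add (hc : ∀ j, e (j + 1) < c j * e j) {k r : ℕ} (hkr : k ≤ r) :
    ∀ N < e (r + 1), ∃ p : ℕ → ℕ, (∀ i ∈ Icc k r, p i < c i) ∧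
      ∑ i ∈ Icc k r, p i * e i ≤ N ∧ N < ∑ i ∈ Icc k r, p i * e i + e k := by
  have he : ∀ j, 0 < e j := fun j => Nat.pos_of_ne_zero fun h => by simpa [h] using hc j
  induction r, hkr using Nat.le_induction with
  | base =>
    intro N hN
    refine ⟨fun _ => N / e k, ?_, ?_, ?_⟩
    · simpa [Nat.div_lt_iff_lt_mul (he k)] using hN.trans (hc k)
    · simpa using Nat.div_mul_le_self N (e k)
    · simpa using Nat.lt_div_mul_add (he k)
  | succ r hkr ih =>
    intro N hN
    obtain ⟨p, hp, hle, hlt⟩ := ih (N % e (r + 1)) (Nat.mod_lt _ (he _))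
    have hsum : ∑ i ∈ Icc k (r + 1), Function.update p (r + 1) (N / e (r + 1)) i * e i
        = ∑ i ∈ Icc k r, p i * e i + N / e (r + 1) * e (r + 1) := by
      rw [sum_Icc_succ_top (by omega), Function.update_self]
      congr 1
      refine sum_congr rfl fun i hi => ?_
      rw [Function.update_of_ne (by grind)]
    have hdiv := Nat.mod_add_div' N (e (r + 1))
    refine ⟨Function.update p (r + 1) (N / e (r + 1)), fun i hi => ?_, ?_, ?_⟩
    · rcases eq_or_ne i (r + 1) with rfl | hne
      · simpa [Nat.div_lt_iff_lt_mul (he _)] using hN.trans (hc _)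
      · rw [Function.update_of_ne hne]
        exact hp i (by grind)
    all_goals omega

theorem exists_digits_sum_mem_Ico (hc : ∀ j, e (j + 1) < c j * e j) {k r : ℕ} (hkr : k ≤ r)
    {M : ℕ} (hM : M + e k ≤ e (r + 1)) : ∃ p : ℕ → ℕ, (∀ i ∈ Icc k r, p i < c i) ∧
      M ≤ ∑ i ∈ Icc k r, p i * e i ∧ ∑ i ∈ Icc k r, p i * e i < M + e k := by
  have hek : 0 < e k := Nat.pos_of_ne_zero fun h => by simpa [h] using hc k
  obtain ⟨p, hp, hle, hlt⟩ := exists_digits_sum_le_lt_add hc hkr (M + e k - 1) (by omega)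
  exact ⟨p, hp, by omega, by omega⟩

end GreedyDigits

theorem strictMono_of_recurrence {a b D : ℕ → ℕ} (ha : ∀ k, 0 < a k) (hb : ∀ k, 1 ≤ b k)
    (hD : ∀ k, 0 < D k) (hrec : ∀ k, D (k + 2) = b (k + 1) * D (k + 1) + a (k + 1) * D k) :
    StrictMono fun k => D (k + 1) :=
  strictMono_nat_of_lt_succ fun k => by
    rw [hrec k]
    nlinarith [ha (k + 1), hb (k + 1), hD k]

theorem greedy_sums_syndetic_general (a b n D : ℕ → ℕ)
    (ha : ∀ k, 0 < a k) (hb : ∀ k, 1 ≤ b k)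
    (hrec : ∀ k, D (k + 2) = b (k + 1) * D (k + 1) + a (k + 1) * D k)
    (hnd : ∀ k, D (k + 2) < n (k + 1) * D (k + 1))
    (k : ℕ) :
    ∀ M : ℕ, ∃ s : ℕ,
      (∃ r : ℕ, k < r ∧ ∃ p : ℕ → ℕ,
        (∀ i, k ≤ i → i ≤ r → p i ≤ n (i + 1) + 1) ∧
        s = ∑ i ∈ Finset.Icc k r, p i * D (i + 1)) ∧
      M ≤ s ∧ s < M + D (k + 1) := by
  intro M
  have hpos : ∀ j, 0 < D (j + 1) := fun j => Nat.pos_of_ne_zero fun h => by simpa [h] using hnd j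
  have hgrow : ∀ j, j ≤ D (j + 2) :=
    (strictMono_of_recurrence (fun j => ha (j + 1)) (fun j => hb (j + 1)) hpos
      fun j => hrec (j + 1)).id_le
  set r := M + D (k + 1) + k + 1
  obtain ⟨p, hp, hle, hlt⟩ := exists_digits_sum_mem_Ico (e := fun j => D (j + 1))
    (c := fun j => n (j + 1)) hnd (by omega : k ≤ r) (M := M) (by have : r ≤ D (r + 1 + 1) := hgrow r; omega)
  exact ⟨_, ⟨r, by omega, p, fun i hki hir => (hp i (mem_Icc.2 ⟨hki, hir⟩)).le.trans
    (by omega), rfl⟩, hle, hlt⟩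

/-- Positive integer sequences with `d_{k+1} = b_{k+1} d_k + a_{k+1} d_{k-1}`
(written with `D k = d_{k-1}`, so `d_k = D (k+1)`), with `a_k ≤ b_k + 1`,
`b_k ≥ 1`, `n_{k+1} ≥ b_{k+1} + 2` and `n_{k+1} d_k > d_{k+1}`.  Then
`S_k = { Σ_{i=k}^r p_i d_i : r > k, 0 ≤ p_i ≤ n_{i+1}+1 }` is syndetic:
every interval of length `d_k` contains an element of `S_k`. -/
theorem greedy_sums_syndetic (a b n D : ℕ → ℕ)
    (ha : ∀ k, 0 < a k) (hb : ∀ k, 1 ≤ b k) (hab : ∀ k, a k ≤ b k + 1)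
    (hD0 : 0 < D 0) (hD1 : 0 < D 1)
    (hrec : ∀ k, D (k + 2) = b (k + 1) * D (k + 1) + a (k + 1) * D k)
    (hn : ∀ k, b (k + 1) + 2 ≤ n (k + 1))
    (hnd : ∀ k, D (k + 2) < n (k + 1) * D (k + 1))
    (k : ℕ) :
    ∀ M : ℕ, ∃ s : ℕ,
      (∃ r : ℕ, k < r ∧ ∃ p : ℕ → ℕ,
        (∀ i, k ≤ i → i ≤ r → p i ≤ n (i + 1) + 1) ∧
        s = ∑ i ∈ Finset.Icc k r, p i * D (i + 1)) ∧
      M ≤ s ∧ s < M + D (k + 1) :=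
  greedy_sums_syndetic_general a b n D ha hb hrec hnd k
end
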